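/- Let d, p ∈ ℝ³ with p ≠ 0 and c ∈ ℝ³ with ‖c‖ = 1, and let r ∈ [0, ζ). Then for every z ∈ U_r there exists t ∈ [−1,1] such that |Im(n_dp(z) − ⟨d−zp, c⟩)| ≤ ‖p‖·( ‖(d−tp)/‖d−tp‖ − c‖·r + r²/(2(ζ−r)) ). -/

import Mathlib

open Complex Set

/-- The principal branch of the complex square root,
`√z := √|z| · (z+|z|)/|z+|z||`. -/
noncomputable def csqrt (z : ℂ) : ℂ :=
  (Real.sqrt ‖z‖ : ℂ) *
    ((z + ((‖z‖ : ℝ) : ℂ)) / ((‖z + ((‖z‖ : ℝ) : ℂ)‖ : ℝ) : ℂ))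

/-- The Euclidean norm on `ℝⁿ`. -/
noncomputable def euclNorm {n : ℕ} (x : Fin n → ℝ) : ℝ := Real.sqrt (∑ j, (x j) ^ 2)

/-!
Pick `t ∈ [-1, 1]` with `|z - t| ≤ r` and write `a = d - t p`, `s = z - t`, `u = a / ‖a‖`, so that
`d - z p = a - s p` and `‖a‖ ≥ ζ ‖p‖`. Split `⟨a - s p, c⟩ = ⟨a - s p, u⟩ - ⟨a - s p, u - c⟩`.
The second term has imaginary part `-(Im s) ⟨p, u - c⟩`, which Cauchy–Schwarz bounds by
`r ‖p‖ ‖u - c‖`. For the radial part `A = ⟨a - s p, u⟩` and `n = √⟨a - s p, a - s p⟩` we have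
`n² - A² = s² (‖p‖² - ⟨p, u⟩²)`, of modulus at most `r² ‖p‖²`, while `Re A` and `Re n` are both at
least `‖a‖ - r ‖p‖ ≥ (ζ - r) ‖p‖`. Hence `|n - A| = |n² - A²| / |n + A| ≤ ‖p‖ r² / (2 (ζ - r))`.
-/

open Finset ComplexConjugate

lemma euclNorm_nonneg {n : ℕ} (x : Fin n → ℝ) : 0 ≤ euclNorm x := Real.sqrt_nonneg _

lemma euclNorm_sq {n : ℕ} (x : Fin n → ℝ) : euclNorm x ^ 2 = ∑ j, x j ^ 2 :=
  Real.sq_sqrt (by positivity)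

lemma abs_sum_mul_le_euclNorm_mul {n : ℕ} (x y : Fin n → ℝ) :
    |∑ j, x j * y j| ≤ euclNorm x * euclNorm y := by
  rw [abs_le]
  refine ⟨?_, Real.sum_mul_le_sqrt_mul_sqrt _ x y⟩
  have h := Real.sum_mul_le_sqrt_mul_sqrt univ (-x) y
  simp only [Pi.neg_apply, neg_mul, sum_neg_distrib, neg_sq] at h
  rw [euclNorm, euclNorm]
  linarith

lemma csqrt_eq_ofReal_mul (z : ℂ) :
    csqrt z = ((√‖z‖ / ‖z + ‖z‖‖ : ℝ) : ℂ) * (z + ‖z‖) := by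
  rw [csqrt]; push_cast; ring

lemma csqrt_re_nonneg (z : ℂ) : 0 ≤ (csqrt z).re := by
  rw [csqrt_eq_ofReal_mul, re_ofReal_mul, add_re, ofReal_re]
  have : 0 ≤ z.re + ‖z‖ := by linarith [neg_abs_le z.re, abs_re_le_norm z]
  positivity

lemma csqrt_sq {z : ℂ} (hz : z + ‖z‖ ≠ 0) : csqrt z ^ 2 = z := by
  have hconj : conj z + ‖z‖ ≠ 0 := fun h => hz (by simpa using congrArg conj h)
  have hnorm : ((‖z + ‖z‖‖ : ℝ) : ℂ) ^ 2 = (z + ‖z‖) * (conj z + ‖z‖) := by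
    rw [← ofReal_pow, Complex.sq_norm, ← mul_conj, map_add, conj_ofReal]
  have hz2 : z * conj z = (‖z‖ : ℂ) ^ 2 := by
    rw [mul_conj, ← ofReal_pow, Complex.sq_norm]
  rw [csqrt, mul_pow, div_pow, ← ofReal_pow, Real.sq_sqrt (norm_nonneg z), hnorm]
  field_simp
  linear_combination -hz2

lemma le_re_csqrt {z : ℂ} {c : ℝ} (hc : 0 ≤ c) (h : c ^ 2 * (c ^ 2 - z.re) ≤ (z.im / 2) ^ 2) :
    c ≤ (csqrt z).re := by
  by_cases hz : z + ‖z‖ = 0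
  · have him : z.im = 0 := by simpa using congrArg im hz
    have hre : z.re + ‖z‖ = 0 := by simpa using congrArg re hz
    have hzero : csqrt z = 0 := by simp [csqrt, hz]
    rw [hzero, zero_re]
    rw [him] at h
    by_contra! hc0
    nlinarith [mul_nonneg (sq_nonneg c) (norm_nonneg z), pow_pos hc0 4]
  · have hsq := csqrt_sq hz
    set n := csqrt z
    have hre : z.re = n.re ^ 2 - n.im ^ 2 := by rw [← hsq]; simp [sq]
    have him : z.im = 2 * n.re * n.im := by rw [← hsq]; simp [sq]; ring
    have hn0 : 0 ≤ n.re := csqrt_re_nonneg z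
    -- `(Re n ^ 2 - c ^ 2) (Im n ^ 2 + c ^ 2) = (Im z / 2) ^ 2 - c ^ 2 (c ^ 2 - Re z)`
    have key : c ^ 2 * (n.im ^ 2 + c ^ 2) ≤ n.re ^ 2 * (n.im ^ 2 + c ^ 2) := by
      rw [hre, him] at h; nlinarith
    rcases hc.eq_or_lt with rfl | hc
    · exact hn0
    · have := le_of_mul_le_mul_right key (by positivity)
      nlinarith

lemma norm_sub_le_norm_sq_sub_sq_div {n A : ℂ} (h : 0 < n.re + A.re) :
    ‖n - A‖ ≤ ‖n ^ 2 - A ^ 2‖ / (n.re + A.re) := by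
  rw [le_div_iff₀ h, sq_sub_sq, norm_mul, mul_comm ‖n + A‖]
  gcongr
  simpa using re_le_norm (n + A)

lemma sub_norm_le_re_csqrt {α κ : ℝ} {w : ℂ} (hκ : |κ| ≤ α) (hw : ‖w‖ ≤ α) :
    α - ‖w‖ ≤ (csqrt (α ^ 2 - 2 * κ * w + w ^ 2)).re := by
  set x := w.re
  set y := w.im
  set ρ := ‖w‖
  set c := α - ρ
  have hc : 0 ≤ c := sub_nonneg.2 hw
  have hρ : ρ ^ 2 = x ^ 2 + y ^ 2 := by rw [Complex.sq_norm, normSq_apply]; ring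
  have hακ : κ ^ 2 ≤ α ^ 2 := sq_le_sq' (abs_le.mp hκ).1 (abs_le.mp hκ).2
  apply le_re_csqrt hc
  have hre : (α ^ 2 - 2 * κ * w + w ^ 2 : ℂ).re = α ^ 2 - 2 * κ * x + x ^ 2 - y ^ 2 := by
    simp [x, y, sq]; ring
  have him : (α ^ 2 - 2 * κ * w + w ^ 2 : ℂ).im / 2 = y * (x - κ) := by
    simp [x, y, sq]; ring
  rw [hre, him]
  -- the difference of the two sides is `((x - κ)² - c²)(y² + c²) + c²(α² - κ²)`
  rcases le_or_gt c |x - κ| with hD | hD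
  · have : c ^ 2 ≤ (x - κ) ^ 2 := by rw [← sq_abs (x - κ)]; gcongr
    nlinarith [mul_nonneg (sub_nonneg.2 this) (add_nonneg (sq_nonneg y) (sq_nonneg c)),
      mul_nonneg (sq_nonneg c) (sub_nonneg.2 hακ)]
  · have hxρ : |x| ≤ ρ := abs_re_le_norm w
    have hκ' : |κ| ≤ |x| + |x - κ| := by simpa using abs_sub x (x - κ)
    have hκ2 : κ ^ 2 ≤ (|x| + |x - κ|) ^ 2 := by
      rw [← sq_abs κ]; exact pow_le_pow_left₀ (abs_nonneg κ) hκ' 2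
    have hρx : 0 ≤ ρ * (c - |x - κ|) + |x - κ| * (ρ - |x|) :=
      add_nonneg (mul_nonneg (norm_nonneg w) (by linarith)) (mul_nonneg (abs_nonneg _) (by linarith))
    nlinarith [sq_abs x, sq_abs (x - κ), mul_nonneg (sq_nonneg c) (sub_nonneg.2 hκ2),
      mul_nonneg (sq_nonneg c) hρx, mul_nonneg (sq_nonneg (x - κ)) (sq_nonneg y)]

lemma norm_csqrt_sub_le {α P K ζ r : ℝ} {s : ℂ} (hP : 0 < P) (hrζ : r < ζ) (hα : ζ * P ≤ α)
    (hK : |K| ≤ α * P) (hs : ‖s‖ ≤ r) :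
    ‖csqrt (α ^ 2 - 2 * s * K + s ^ 2 * P ^ 2) - (α - s * (K / α))‖
      ≤ P * r ^ 2 / (2 * (ζ - r)) := by
  have hr : 0 ≤ r := (norm_nonneg s).trans hs
  have hα0 : 0 < α := lt_of_lt_of_le (mul_pos (by linarith) hP) hα
  have hk : |K / α| ≤ P := by rw [abs_div, abs_of_pos hα0, div_le_iff₀ hα0]; linarith
  set W : ℂ := α ^ 2 - 2 * s * K + s ^ 2 * P ^ 2
  set n := csqrt W
  set A : ℂ := α - s * (K / α)
  have hn : (ζ - r) * P ≤ n.re := by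
    have hW : W = α ^ 2 - 2 * (K / P : ℝ) * (s * P) + (s * P) ^ 2 := by
      have : (P : ℂ) ≠ 0 := ofReal_ne_zero.2 hP.ne'
      simp only [W]; push_cast; field_simp
    have hκ : |K / P| ≤ α := by rw [abs_div, abs_of_pos hP, div_le_iff₀ hP]; exact hK
    have hw : ‖s * P‖ = ‖s‖ * P := by rw [norm_mul, norm_real, Real.norm_of_nonneg hP.le]
    have := sub_norm_le_re_csqrt hκ (hw ▸ (by nlinarith : ‖s‖ * P ≤ α))
    rw [← hW, hw] at this
    nlinarith
  have hA : (ζ - r) * P ≤ A.re := by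
    have hre : A.re = α - s.re * (K / α) := by simp [A]
    have : |s.re * (K / α)| ≤ r * P := by
      rw [abs_mul]
      exact mul_le_mul ((abs_re_le_norm s).trans hs) hk (abs_nonneg _) hr
    rw [hre]; nlinarith [le_abs_self (s.re * (K / α))]
  have hpos : 0 < 2 * (ζ - r) * P := by have := sub_pos.2 hrζ; positivity
  have hsq : n ^ 2 = W := by
    refine csqrt_sq fun h => ?_
    have : n = 0 := by simp [n, csqrt, h]
    rw [this, zero_re] at hn
    nlinarith
  have hdiff : ‖n ^ 2 - A ^ 2‖ ≤ r ^ 2 * P ^ 2 := by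
    have hb : 0 ≤ P ^ 2 - (K / α) ^ 2 := by rw [sub_nonneg, ← sq_abs]; gcongr
    have : n ^ 2 - A ^ 2 = s ^ 2 * ((P ^ 2 - (K / α) ^ 2 : ℝ) : ℂ) := by
      have : (α : ℂ) ≠ 0 := ofReal_ne_zero.2 hα0.ne'
      rw [hsq]; simp only [W, A]; push_cast; field_simp; ring
    rw [this, norm_mul, norm_pow, norm_real, Real.norm_of_nonneg hb]
    have : ‖s‖ ^ 2 ≤ r ^ 2 := by gcongr
    nlinarith [sq_nonneg (K / α)]
  calc ‖n - A‖ ≤ ‖n ^ 2 - A ^ 2‖ / (n.re + A.re) := norm_sub_le_norm_sq_sub_sq_div (by linarith)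
    _ ≤ r ^ 2 * P ^ 2 / (2 * (ζ - r) * P) := by
      gcongr ?_ / ?_
      linarith
    _ = P * r ^ 2 / (2 * (ζ - r)) := by field_simp

section Bilinear

variable {n : ℕ} (a p : Fin n → ℝ) (s : ℂ)

lemma ofReal_euclNorm_sq : (euclNorm a : ℂ) ^ 2 = ∑ j, (a j : ℂ) * a j := by
  rw [← ofReal_pow, euclNorm_sq]; push_cast; simp only [sq]

lemma sum_sub_mul_sq :
    ∑ j, ((a j : ℂ) - s * p j) * ((a j : ℂ) - s * p j)
      = (euclNorm a : ℂ) ^ 2 - 2 * s * (∑ j, a j * p j : ℝ) + s ^ 2 * (euclNorm p : ℂ) ^ 2 := by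
  rw [ofReal_euclNorm_sq, ofReal_euclNorm_sq]; push_cast
  rw [mul_sum, mul_sum, ← sum_sub_distrib, ← sum_add_distrib]
  exact sum_congr rfl fun j _ => by ring

lemma sum_sub_mul_mul_inv_smul_self (ha : euclNorm a ≠ 0) :
    ∑ j, ((a j : ℂ) - s * p j) * ((euclNorm a)⁻¹ • a) j
      = euclNorm a - s * (((∑ j, a j * p j : ℝ) : ℂ) / euclNorm a) := by
  have ha' : (euclNorm a : ℂ) ≠ 0 := ofReal_ne_zero.2 ha
  calc ∑ j, ((a j : ℂ) - s * p j) * ((euclNorm a)⁻¹ • a) j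
      = (euclNorm a : ℂ)⁻¹ * (∑ j, (a j : ℂ) * a j - s * ∑ j, (a j * p j : ℝ)) := by
        push_cast
        rw [mul_sum, ← sum_sub_distrib, mul_sum]
        exact sum_congr rfl fun j _ => by simp only [Pi.smul_apply, smul_eq_mul]; push_cast; ring
    _ = _ := by rw [← ofReal_euclNorm_sq]; push_cast; field_simp

lemma im_sum_sub_mul_mul (x : Fin n → ℝ) :
    (∑ j, ((a j : ℂ) - s * p j) * x j).im = -(s.im * ∑ j, p j * x j) := by
  simp [im_sum, mul_sum, ← sum_neg_distrib, mul_assoc]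

end Bilinear

lemma abs_im_csqrt_sub_le {n : ℕ} (a p c : Fin n → ℝ) {s : ℂ} {ζ r : ℝ}
    (hP : 0 < euclNorm p) (hrζ : r < ζ) (hα : ζ * euclNorm p ≤ euclNorm a) (hs : ‖s‖ ≤ r) :
    |(csqrt (∑ j, ((a j : ℂ) - s * p j) * ((a j : ℂ) - s * p j))
        - ∑ j, ((a j : ℂ) - s * p j) * c j).im|
      ≤ euclNorm p * (euclNorm ((euclNorm a)⁻¹ • a - c) * r + r ^ 2 / (2 * (ζ - r))) := by
  set u := (euclNorm a)⁻¹ • a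
  have hr : 0 ≤ r := (norm_nonneg s).trans hs
  have ha : euclNorm a ≠ 0 := (lt_of_lt_of_le (mul_pos (by linarith) hP) hα).ne'
  have hsplit : ∑ j, ((a j : ℂ) - s * p j) * c j
      = ∑ j, ((a j : ℂ) - s * p j) * u j - ∑ j, ((a j : ℂ) - s * p j) * (u - c) j := by
    rw [← sum_sub_distrib]
    exact sum_congr rfl fun j _ => by simp only [Pi.sub_apply, ofReal_sub]; ring
  have hradial := norm_csqrt_sub_le hP hrζ hα (abs_sum_mul_le_euclNorm_mul a p) hs
  rw [← sum_sub_mul_sq, ← sum_sub_mul_mul_inv_smul_self a p s ha] at hradial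
  have htangential : |(∑ j, ((a j : ℂ) - s * p j) * (u - c) j).im|
      ≤ euclNorm p * euclNorm (u - c) * r := by
    rw [im_sum_sub_mul_mul, abs_neg, abs_mul, mul_comm]
    exact mul_le_mul (abs_sum_mul_le_euclNorm_mul p _) ((abs_im_le_norm s).trans hs)
      (abs_nonneg _) (mul_nonneg hP.le (euclNorm_nonneg _))
  rw [hsplit, sub_sub_eq_add_sub, add_sub_right_comm, add_im]
  calc _ ≤ _ := abs_add_le _ _
    _ ≤ euclNorm p * r ^ 2 / (2 * (ζ - r)) + euclNorm p * euclNorm (u - c) * r :=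
      add_le_add ((abs_im_le_norm _).trans hradial) htangential
    _ = _ := by ring

theorem stmt5_general (d p c : Fin 3 → ℝ)
    (ndp : ℂ → ℂ)
    (hndp : ndp = fun z => csqrt (∑ j, ((d j : ℂ) - z * (p j : ℂ)) * ((d j : ℂ) - z * (p j : ℂ))))
    (ζ : ℝ) (hζ : ζ = sInf {x : ℝ | ∃ t ∈ Set.Icc (-1 : ℝ) 1, x = euclNorm (d - t • p) / euclNorm p})
    (r : ℝ) (hrζ : r < ζ)
    (Ur : Set ℂ) (hUr : Ur = {z : ℂ | ∃ t ∈ Set.Icc (-1 : ℝ) 1, ‖z - (t : ℂ)‖ ≤ r}) :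
    ∀ z ∈ Ur, ∃ t ∈ Set.Icc (-1 : ℝ) 1,
      |(ndp z - ∑ j, ((d j : ℂ) - z * (p j : ℂ)) * (c j : ℂ)).im| ≤
        euclNorm p * (euclNorm ((euclNorm (d - t • p))⁻¹ • (d - t • p) - c) * r
          + r ^ 2 / (2 * (ζ - r))) := by
  subst hUr hndp
  rintro z ⟨t, ht, hzt⟩
  refine ⟨t, ht, ?_⟩
  have hζt : ζ ≤ euclNorm (d - t • p) / euclNorm p :=
    hζ ▸ csInf_le ⟨0, by rintro x ⟨t', -, rfl⟩; exact div_nonneg (euclNorm_nonneg _) (euclNorm_nonneg _)⟩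
      ⟨t, ht, rfl⟩
  have hζ0 : 0 < ζ := ((norm_nonneg _).trans hzt).trans_lt hrζ
  have hP : 0 < euclNorm p := by
    refine (euclNorm_nonneg p).lt_of_ne fun h => ?_
    rw [← h, div_zero] at hζt
    linarith
  have hshift : ∀ j, (d j : ℂ) - z * p j = ((d - t • p) j : ℂ) - (z - t) * p j := fun j => by
    simp only [Pi.sub_apply, Pi.smul_apply, smul_eq_mul, ofReal_sub, ofReal_mul]; ring
  simp only [hshift]
  exact abs_im_csqrt_sub_le _ p c hP hrζ ((le_div_iff₀ hP).mp hζt) hzt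

/-- exponent bound: for every `z ∈ U_r` there is `t ∈ [−1,1]` with
`|Im(n_dp(z) − ⟨d−zp, c⟩)| ≤ ‖p‖·( ‖(d−tp)/‖d−tp‖ − c‖·r + r²/(2(ζ−r)) )`. -/
theorem stmt5 (d p c : Fin 3 → ℝ) (hp : p ≠ 0) (hc : euclNorm c = 1)
    (wr : ℝ) (hwr : wr = (∑ j, d j * p j) / (euclNorm p) ^ 2)
    (wi : ℝ) (hwi : wi = Real.sqrt ((euclNorm d) ^ 2 / (euclNorm p) ^ 2 - wr ^ 2))
    (w : ℂ) (hw : w = (wr : ℂ) + (wi : ℂ) * Complex.I)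
    (ndp : ℂ → ℂ)
    (hndp : ndp = fun z => csqrt (∑ j, ((d j : ℂ) - z * (p j : ℂ)) * ((d j : ℂ) - z * (p j : ℂ))))
    (ζ : ℝ) (hζ : ζ = sInf {x : ℝ | ∃ t ∈ Set.Icc (-1 : ℝ) 1, x = euclNorm (d - t • p) / euclNorm p})
    (r : ℝ) (hr0 : 0 ≤ r) (hrζ : r < ζ)
    (Ur : Set ℂ) (hUr : Ur = {z : ℂ | ∃ t ∈ Set.Icc (-1 : ℝ) 1, ‖z - (t : ℂ)‖ ≤ r}) :
    ∀ z ∈ Ur, ∃ t ∈ Set.Icc (-1 : ℝ) 1,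
      |(ndp z - ∑ j, ((d j : ℂ) - z * (p j : ℂ)) * (c j : ℂ)).im| ≤
        euclNorm p * (euclNorm ((euclNorm (d - t • p))⁻¹ • (d - t • p) - c) * r
          + r ^ 2 / (2 * (ζ - r))) :=
  stmt5_general d p c ndp hndp ζ hζ r hrζ Ur hUr
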